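/- Let A and B be disjoint countably infinite sets with 0 ∉ A ∪ B, and let F_1 be one of F_in[A], F_rn[A], F_it[A], F_rt[A] and F_2 one of F_in[B], F_rn[B], F_it[B], F_rt[B]. Then Log(N_ω(F_1) × N_ω(F_2)) = Log(F_1) ⊗ Log(F_2). -/

import Mathlib

set_option autoImplicit false

/-- Modal formulas with `n` modalities (propositional letters indexed by `ℕ`). -/
inductive MFormula (n : ℕ) : Type
  | prop : ℕ → MFormula n
  | bot  : MFormula n
  | imp  : MFormula n → MFormula n → MFormula n
  | box  : Fin n → MFormula n → MFormula n

namespace MFormula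

/-- Negation as an abbreviation: ¬φ := φ → ⊥. -/
def neg {n : ℕ} (φ : MFormula n) : MFormula n := φ.imp .bot

/-- Uniform substitution of formulas for propositional letters. -/
def subst {n : ℕ} (s : ℕ → MFormula n) : MFormula n → MFormula n
  | prop p  => s p
  | bot     => bot
  | imp φ ψ => imp (φ.subst s) (ψ.subst s)
  | box i φ => box i (φ.subst s)

end MFormula

/-- A classical tautology: true under every boolean valuation of formulas
(a valuation respecting `⊥` and `→`, arbitrary on letters and boxed formulas). -/
def IsTautology {n : ℕ} (φ : MFormula n) : Prop :=
  ∀ v : MFormula n → Prop,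
    ¬ v .bot → (∀ ψ χ : MFormula n, v (ψ.imp χ) ↔ (v ψ → v χ)) → v φ

/-- Normal modal logics with `n` modalities. -/
structure IsNormalLogic {n : ℕ} (L : Set (MFormula n)) : Prop where
  taut : ∀ φ : MFormula n, IsTautology φ → φ ∈ L
  kax : ∀ (i : Fin n) (p q : MFormula n),
    ((MFormula.box i (p.imp q)).imp ((MFormula.box i p).imp (MFormula.box i q))) ∈ L
  mp : ∀ φ ψ : MFormula n, φ.imp ψ ∈ L → φ ∈ L → ψ ∈ L
  subst : ∀ (φ : MFormula n) (s : ℕ → MFormula n), φ ∈ L → φ.subst s ∈ L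
  nec : ∀ (i : Fin n) (φ : MFormula n), φ ∈ L → MFormula.box i φ ∈ L

/-- The smallest normal logic containing `Γ`. -/
def NormalClosure {n : ℕ} (Γ : Set (MFormula n)) : Set (MFormula n) :=
  ⋂₀ {L : Set (MFormula n) | IsNormalLogic L ∧ Γ ⊆ L}

/-- The axiom □p → ¬□¬p. -/
def dAx : MFormula 1 :=
  (MFormula.box 0 (.prop 0)).imp (MFormula.neg (MFormula.box 0 (MFormula.neg (.prop 0))))

/-- The axiom □p → p. -/
def tAx : MFormula 1 := (MFormula.box 0 (.prop 0)).imp (.prop 0)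

/-- The axiom □p → □□p. -/
def fourAx : MFormula 1 :=
  (MFormula.box 0 (.prop 0)).imp (MFormula.box 0 (MFormula.box 0 (.prop 0)))

def LogicK : Set (MFormula 1) := NormalClosure ∅
def LogicD : Set (MFormula 1) := NormalClosure (LogicK ∪ {dAx})
def LogicT : Set (MFormula 1) := NormalClosure (LogicK ∪ {tAx})
def LogicD4 : Set (MFormula 1) := NormalClosure (LogicD ∪ {fourAx})
def LogicS4 : Set (MFormula 1) := NormalClosure (LogicT ∪ {fourAx})

/-- Translation of a unimodal formula into the bimodal language, replacing □ by □_i. -/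
def trTo (i : Fin 2) : MFormula 1 → MFormula 2
  | .prop p  => .prop p
  | .bot     => .bot
  | .imp φ ψ => .imp (trTo i φ) (trTo i ψ)
  | .box _ φ => .box i (trTo i φ)

/-- The fusion `L₁ ⊗ L₂` of two unimodal logics: the smallest bimodal normal logic
containing the translation of `L₁` (□ ↦ □₁) and of `L₂` (□ ↦ □₂). -/
def Fusion (L₁ L₂ : Set (MFormula 1)) : Set (MFormula 2) :=
  NormalClosure (trTo 0 '' L₁ ∪ trTo 1 '' L₂)

/-- Truth in a Kripke model. -/
def kSat {n : ℕ} {W : Type} (R : Fin n → W → W → Prop) (V : ℕ → Set W) :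
    W → MFormula n → Prop
  | w, .prop p  => w ∈ V p
  | _, .bot     => False
  | w, .imp φ ψ => kSat R V w φ → kSat R V w ψ
  | w, .box i φ => ∀ v : W, R i w v → kSat R V v φ

/-- The logic of a Kripke `n`-frame. -/
def KLogn {n : ℕ} {W : Type} [Nonempty W] (R : Fin n → W → W → Prop) :
    Set (MFormula n) :=
  {φ | ∀ (V : ℕ → Set W) (w : W), kSat R V w φ}

/-- The logic of a unimodal Kripke frame. -/
def KLog {W : Type} [Nonempty W] (R : W → W → Prop) : Set (MFormula 1) :=
  KLogn (fun _ => R)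

/-- The logic of a bimodal Kripke frame. -/
def KLog2 {W : Type} [Nonempty W] (R₁ R₂ : W → W → Prop) : Set (MFormula 2) :=
  KLogn ![R₁, R₂]

/-- Truth in a (monotone) neighborhood model: `x ⊨ □_i φ` iff the truth set of `φ`
belongs to the filter `τ i x`. -/
def nSat {n : ℕ} {X : Type} (τ : Fin n → X → Filter X) (V : ℕ → Set X) :
    X → MFormula n → Prop
  | x, .prop p  => x ∈ V p
  | _, .bot     => False
  | x, .imp φ ψ => nSat τ V x φ → nSat τ V x ψ
  | x, .box i φ => {y | nSat τ V y φ} ∈ τ i x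

/-- The logic of a neighborhood `n`-frame. -/
def NLogn {n : ℕ} {X : Type} [Nonempty X] (τ : Fin n → X → Filter X) :
    Set (MFormula n) :=
  {φ | ∀ (V : ℕ → Set X) (x : X), nSat τ V x φ}

/-- The logic of a unimodal neighborhood frame. -/
def NLog {X : Type} [Nonempty X] (τ : X → Filter X) : Set (MFormula 1) :=
  NLogn (fun _ => τ)

/-- The logic of a neighborhood 2-frame. -/
def NLog2 {X : Type} [Nonempty X] (τ₁ τ₂ : X → Filter X) : Set (MFormula 2) :=
  NLogn ![τ₁, τ₂]

/-- Validity of a unimodal formula in a neighborhood frame. -/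
def NValid {X : Type} (τ : X → Filter X) (φ : MFormula 1) : Prop :=
  ∀ (V : ℕ → Set X) (x : X), nSat (fun _ => τ) V x φ

/-- The neighborhood frame `N(F)` of a Kripke frame `F = (W, R)`:
`τ(w)` is the principal filter of `R(w)`. -/
def nOfK {W : Type} (R : W → W → Prop) (w : W) : Filter W :=
  Filter.principal {v | R w v}

/-- Bounded morphisms between neighborhood frames (with neighborhood functions
indexed by `ι`). -/
def IsNdMorphism {ι X Y : Type} (τ : ι → X → Filter X) (σ : ι → Y → Filter Y)
    (f : X → Y) : Prop :=
  Function.Surjective f ∧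
    ∀ (i : ι) (x : X),
      (∀ U ∈ τ i x, f '' U ∈ σ i (f x)) ∧
      (∀ V ∈ σ i (f x), ∃ U ∈ τ i x, f '' U ⊆ V)

/-- First neighborhood function of the product of two neighborhood frames:
`U ∈ τ'_1(x₁,x₂)` iff `∃ V ∈ τ₁ x₁, V × {x₂} ⊆ U`. -/
def prodTau1 {X₁ X₂ : Type} (τ₁ : X₁ → Filter X₁) (p : X₁ × X₂) :
    Filter (X₁ × X₂) :=
  (τ₁ p.1).map (fun x => (x, p.2))

/-- Second neighborhood function of the product of two neighborhood frames:
`U ∈ τ'_2(x₁,x₂)` iff `∃ V ∈ τ₂ x₂, {x₁} × V ⊆ U`. -/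
def prodTau2 {X₁ X₂ : Type} (τ₂ : X₂ → Filter X₂) (p : X₁ × X₂) :
    Filter (X₁ × X₂) :=
  (τ₂ p.2).map (fun y => (p.1, y))

/-- The successor relation on finite sequences: `a R b` iff `b = a·x` for some `x ∈ A`. -/
def sucRel (A : Type) (a b : List A) : Prop := ∃ x : A, b = a ++ [x]

/-- The four kinds of tree frames: irreflexive/reflexive, non-transitive/transitive. -/
inductive TreeKind : Type
  | inn  -- irreflexive non-transitive: F_in
  | rn   -- reflexive non-transitive: F_rn (reflexive closure)
  | itr  -- irreflexive transitive: F_it (transitive closure)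
  | rt   -- reflexive transitive: F_rt (reflexive-transitive closure)

/-- The relation of the tree frame `F_{ξη}[A]` on `A*`. -/
def treeRel (A : Type) : TreeKind → List A → List A → Prop
  | .inn => sucRel A
  | .rn  => fun a b => a = b ∨ sucRel A a b
  | .itr => Relation.TransGen (sucRel A)
  | .rt  => Relation.ReflTransGen (sucRel A)

/-- First relation of the product frame `F₁ ⊗ F₂` on `(A ⊔ B)*`:
`x R'_1 y` iff `y = x·z` for some `z ∈ A*` with `Λ R₁ z`. -/
def prodRel1 (A B : Type) (k : TreeKind) (x y : List (A ⊕ B)) : Prop :=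
  ∃ z : List A, treeRel A k [] z ∧ y = x ++ z.map Sum.inl

/-- Second relation of the product frame `F₁ ⊗ F₂` on `(A ⊔ B)*`. -/
def prodRel2 (A B : Type) (k : TreeKind) (x y : List (A ⊕ B)) : Prop :=
  ∃ z : List B, treeRel B k [] z ∧ y = x ++ z.map Sum.inr

/-- Pseudo-infinite sequences over `A ∪ {0}` (with `0` modelled by `none`, so
automatically `0 ∉ A`) that are eventually `0`. -/
def PSeq (A : Type) : Type :=
  {α : ℕ → Option A // ∃ N, ∀ k ≥ N, α k = none}

instance {A : Type} : Nonempty (PSeq A) := ⟨⟨fun _ => none, 0, fun _ _ => rfl⟩⟩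

/-- `st(α)`: the least `N` such that `α` has only zeros from position `N` on. -/
noncomputable def PSeq.st {A : Type} (α : PSeq A) : ℕ :=
  sInf {N | ∀ k ≥ N, α.1 k = none}

/-- `f_F(α)`: the finite sequence obtained from `α` by deleting all zeros. -/
noncomputable def PSeq.forget {A : Type} (α : PSeq A) : List A :=
  ((List.range α.st).map α.1).reduceOption

/-- The basic neighborhood `U_k(α)` of `α`, relative to the relation `R` on `A*`:
`{β ∈ X : α|_m = β|_m and f_F(α) R f_F(β)}` where `m = max(k, st(α))`. -/
def Unbhd {A : Type} (R : List A → List A → Prop) (k : ℕ) (α : PSeq A) :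
    Set (PSeq A) :=
  {β | (∀ i < max k α.st, α.1 i = β.1 i) ∧ R α.forget β.forget}

/-- The neighborhood function of `N_ω(F)`: `τ(α)` is the filter generated by the
base `{U_k(α) : k ∈ ℕ}`. -/
noncomputable def nOmega {A : Type} (R : List A → List A → Prop) (α : PSeq A) :
    Filter (PSeq A) :=
  ⨅ k : ℕ, Filter.principal (Unbhd R k α)

/-- The interleaving `x₁ y₁ x₂ y₂ …` of two pseudo-infinite sequences. -/
def interleave {A B : Type} (α : PSeq A) (β : PSeq B) : PSeq (A ⊕ B) :=
  ⟨fun n => if n % 2 = 0 then (α.1 (n / 2)).map Sum.inl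
            else (β.1 (n / 2)).map Sum.inr, by
    obtain ⟨N₁, h₁⟩ := α.2
    obtain ⟨N₂, h₂⟩ := β.2
    refine ⟨2 * max N₁ N₂, fun k hk => ?_⟩
    have hdiv : max N₁ N₂ ≤ k / 2 := by omega
    by_cases h : k % 2 = 0
    · simp [h, h₁ (k / 2) (le_trans (le_max_left _ _) hdiv)]
    · simp [h, h₂ (k / 2) (le_trans (le_max_right _ _) hdiv)]⟩

/-- The map `g`: delete all zeros from the interleaving of `α` and `β`. -/
noncomputable def gMap {A B : Type} (p : PSeq A × PSeq B) : List (A ⊕ B) :=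
  (interleave p.1 p.2).forget

/-!
A formula outside the fusion is refuted at the root of a canonical model on the tree `(A ⊔ B)*`
whose nodes carry maximal consistent sets: letters of `A` serve `□₁`, letters of `B` serve `□₂`,
and countability lets every formula be named by letters of either sort. This tree is the Kripke
product `F₁ ⊗ F₂`, and `g` (delete the zeros of the interleaving) is a bounded morphism from
`N_ω(F₁) × N_ω(F₂)` onto it with `g(0, 0) = []`, so the refutation transfers to the neighborhood
product.

Conversely, a product of neighborhood frames validates the fusion of their logics, and
`Log(F) ⊆ Log(N_ω(F))`: the same canonical-tree argument with one modality shows that `Log(F)`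
is axiomatized by D, plus T for reflexive and 4 for transitive kinds, and these axioms hold in
`N_ω(F)`.
-/

open MFormula

namespace MFormula
variable {n : ℕ}

def dAxiom (i : Fin n) : MFormula n := (box i (prop 0)).imp (box i (prop 0).neg).neg

def tAxiom (i : Fin n) : MFormula n := (box i (prop 0)).imp (prop 0)

def fourAxiom (i : Fin n) : MFormula n := (box i (prop 0)).imp (box i (box i (prop 0)))

end MFormula

section NormalLogic
variable {n : ℕ} {L : Set (MFormula n)}

theorem isNormalLogic_normalClosure (Γ : Set (MFormula n)) :
    IsNormalLogic (NormalClosure Γ) where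
  taut φ h _ hL := hL.1.taut φ h
  kax i p q _ hL := hL.1.kax i p q
  mp φ ψ h₁ h₂ L hL := hL.1.mp φ ψ (h₁ L hL) (h₂ L hL)
  subst φ s h L hL := hL.1.subst φ s (h L hL)
  nec i φ h L hL := hL.1.nec i φ (h L hL)

theorem subset_normalClosure (Γ : Set (MFormula n)) : Γ ⊆ NormalClosure Γ :=
  fun _ h _ hL => hL.2 h

theorem normalClosure_subset {Γ : Set (MFormula n)} (hL : IsNormalLogic L) (h : Γ ⊆ L) :
    NormalClosure Γ ⊆ L :=
  fun _ hφ => hφ L ⟨hL, h⟩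

theorem foldr_imp_iff {v : MFormula n → Prop}
    (hv : ∀ φ ψ : MFormula n, v (φ.imp ψ) ↔ (v φ → v ψ)) (l : List (MFormula n))
    (ψ : MFormula n) : v (l.foldr imp ψ) ↔ ((∀ χ ∈ l, v χ) → v ψ) := by
  induction l with
  | nil => simp
  | cons χ l ih => simp only [List.foldr_cons, hv, ih, List.forall_mem_cons]; tauto

theorem IsNormalLogic.box_foldr_imp (hL : IsNormalLogic L) (i : Fin n)
    (l : List (MFormula n)) (ψ : MFormula n) :
    (box i (l.foldr imp ψ)).imp ((l.map (box i)).foldr imp (box i ψ)) ∈ L := by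
  induction l with
  | nil => exact hL.taut _ fun v _ hv => (hv _ _).2 id
  | cons χ l ih =>
    refine hL.mp _ _ (hL.mp _ _ (hL.taut _ fun v _ hv => ?_) (hL.kax i χ (l.foldr imp ψ))) ih
    simp only [List.map_cons, List.foldr_cons, hv]
    tauto

theorem IsNormalLogic.neg_box_bot_mem (hL : IsNormalLogic L) {i : Fin n}
    (h : dAxiom i ∈ L) : (box i bot).neg ∈ L := by
  have hD : (box i bot).imp (box i bot.neg).neg ∈ L := hL.subst _ (fun _ => bot) h
  have hnec : box i bot.neg ∈ L := hL.nec i _ (hL.taut _ fun v _ hv => (hv _ _).2 id)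
  refine hL.mp _ _ (hL.mp _ _ (hL.taut _ fun v _ hv => ?_) hD) hnec
  simp only [neg, hv]
  tauto

def Derives (L S : Set (MFormula n)) (ψ : MFormula n) : Prop :=
  ∃ l : List (MFormula n), (∀ χ ∈ l, χ ∈ S) ∧ l.foldr imp ψ ∈ L

def Consistent (L S : Set (MFormula n)) : Prop := ¬ Derives L S bot

namespace Derives
variable {S : Set (MFormula n)} {φ ψ : MFormula n}

theorem of_mem_logic (h : ψ ∈ L) : Derives L S ψ := ⟨[], by simp, h⟩

theorem of_mem (hL : IsNormalLogic L) (h : ψ ∈ S) : Derives L S ψ :=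
  ⟨[ψ], by simpa using h, hL.taut _ fun v _ hv => (hv _ _).2 id⟩

theorem mp (hL : IsNormalLogic L) (h₁ : Derives L S (φ.imp ψ)) (h₂ : Derives L S φ) :
    Derives L S ψ := by
  obtain ⟨l₁, hl₁, h₁⟩ := h₁
  obtain ⟨l₂, hl₂, h₂⟩ := h₂
  refine ⟨l₁ ++ l₂, List.forall_mem_append.2 ⟨hl₁, hl₂⟩,
    hL.mp _ _ (hL.mp _ _ (hL.taut _ fun v _ hv => ?_) h₁) h₂⟩
  simp only [hv, foldr_imp_iff hv, List.forall_mem_append]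
  tauto

theorem mp_logic (hL : IsNormalLogic L) (h₁ : φ.imp ψ ∈ L) (h₂ : Derives L S φ) :
    Derives L S ψ :=
  (of_mem_logic h₁).mp hL h₂

theorem imp_of_insert (hL : IsNormalLogic L) (h : Derives L (insert φ S) ψ) :
    Derives L S (φ.imp ψ) := by
  classical
  obtain ⟨l, hl, h⟩ := h
  refine ⟨l.filter (· ≠ φ), fun χ hχ => ?_, hL.mp _ _ (hL.taut _ fun v _ hv => ?_) h⟩
  · obtain ⟨hχl, hχφ⟩ := List.mem_filter.1 hχ
    exact (hl χ hχl).resolve_left (by simpa using hχφ)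
  · simp only [hv, foldr_imp_iff hv, List.mem_filter, decide_eq_true_eq]
    intro hl hrest hφ
    exact hl fun χ hχ => by_cases (fun hc : χ = φ => hc ▸ hφ) fun hc => hrest χ ⟨hχ, hc⟩

theorem nec (hL : IsNormalLogic L) (i : Fin n) (h : Derives L {χ | box i χ ∈ S} ψ) :
    Derives L S (box i ψ) := by
  obtain ⟨l, hl, h⟩ := h
  exact ⟨l.map (box i), by simpa using hl, hL.mp _ _ (hL.box_foldr_imp i l ψ) (hL.nec i _ h)⟩

end Derives

def IsMCS (L Γ : Set (MFormula n)) : Prop := Maximal (Consistent L) Γ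

theorem exists_isMCS_superset {S : Set (MFormula n)} (hS : Consistent L S) :
    ∃ Γ, S ⊆ Γ ∧ IsMCS L Γ := by
  refine zorn_subset_nonempty {T | Consistent L T} (fun c hc hchain hne =>
    ⟨⋃₀ c, ?_, fun _ hT => Set.subset_sUnion_of_mem hT⟩) S hS
  rintro ⟨l, hl, hbot⟩
  obtain ⟨T, hTc, hlT⟩ := hchain.directedOn.exists_mem_subset_of_finite_of_subset_sUnion hne
    l.finite_toSet hl
  exact hc hTc ⟨l, hlT, hbot⟩

namespace IsMCS
variable {Γ : Set (MFormula n)} {φ ψ : MFormula n}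

theorem mem_of_derives (hL : IsNormalLogic L) (hΓ : IsMCS L Γ) (h : Derives L Γ ψ) : ψ ∈ Γ := by
  by_contra hψ
  have hins : Derives L (insert ψ Γ) bot := by
    by_contra hcon
    exact hψ (hΓ.2 hcon (Set.subset_insert ψ Γ) (Set.mem_insert ψ Γ))
  exact hΓ.1 ((hins.imp_of_insert hL).mp hL h)

theorem mem_of_mem_logic (hL : IsNormalLogic L) (hΓ : IsMCS L Γ) (h : ψ ∈ L) : ψ ∈ Γ :=
  hΓ.mem_of_derives hL (.of_mem_logic h)

theorem bot_not_mem (hL : IsNormalLogic L) (hΓ : IsMCS L Γ) : bot ∉ Γ :=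
  fun h => hΓ.1 (.of_mem hL h)

theorem neg_derives_of_not_mem (hL : IsNormalLogic L) (hΓ : IsMCS L Γ) (h : φ ∉ Γ) :
    Derives L Γ φ.neg := by
  refine Derives.imp_of_insert hL (not_not.1 fun hcon => h ?_)
  exact hΓ.2 hcon (Set.subset_insert φ Γ) (Set.mem_insert φ Γ)

theorem imp_mem_iff (hL : IsNormalLogic L) (hΓ : IsMCS L Γ) :
    φ.imp ψ ∈ Γ ↔ (φ ∈ Γ → ψ ∈ Γ) := by
  refine ⟨fun h hφ => hΓ.mem_of_derives hL ((Derives.of_mem hL h).mp hL (.of_mem hL hφ)),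
    fun h => hΓ.mem_of_derives hL ?_⟩
  by_cases hφ : φ ∈ Γ
  · refine .mp_logic hL (hL.taut _ fun v _ hv => ?_) (.of_mem hL (h hφ))
    simp only [hv]
    tauto
  · refine .mp_logic hL (hL.taut _ fun v hb hv => ?_) (hΓ.neg_derives_of_not_mem hL hφ)
    simp only [neg, hv]
    tauto

theorem neg_mem_iff (hL : IsNormalLogic L) (hΓ : IsMCS L Γ) : φ.neg ∈ Γ ↔ φ ∉ Γ :=
  (hΓ.imp_mem_iff hL).trans ⟨fun h hφ => hΓ.bot_not_mem hL (h hφ), fun h hφ => absurd hφ h⟩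

theorem exists_isMCS_of_box_not_mem (hL : IsNormalLogic L) (hΓ : IsMCS L Γ) {i : Fin n}
    (h : box i ψ ∉ Γ) : ∃ Δ, IsMCS L Δ ∧ {χ | box i χ ∈ Γ} ⊆ Δ ∧ ψ ∉ Δ := by
  have hcon : Consistent L (insert ψ.neg {χ | box i χ ∈ Γ}) := by
    refine fun hbot => h (hΓ.mem_of_derives hL (.nec hL i ?_))
    refine .mp_logic hL (hL.taut _ fun v hb hv => ?_) (hbot.imp_of_insert hL)
    simp only [neg, hv]
    tauto
  obtain ⟨Δ, hsub, hΔ⟩ := exists_isMCS_superset hcon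
  exact ⟨Δ, hΔ, fun χ hχ => hsub (Set.mem_insert_of_mem _ hχ),
    (hΔ.neg_mem_iff hL).1 (hsub (Set.mem_insert _ _))⟩

theorem exists_succ (hL : IsNormalLogic L) (hΓ : IsMCS L Γ) {i : Fin n}
    (hD : (box i bot).neg ∈ L) (ψ : MFormula n) :
    ∃ Δ, IsMCS L Δ ∧ {χ | box i χ ∈ Γ} ⊆ Δ ∧ (box i ψ ∉ Γ → ψ ∉ Δ) := by
  by_cases h : box i ψ ∈ Γ
  · -- `□ᵢ⊥ ∉ Γ` by D, and a successor refuting `⊥` serves.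
    obtain ⟨Δ, hΔ, hsub, -⟩ :=
      hΓ.exists_isMCS_of_box_not_mem hL ((hΓ.neg_mem_iff hL).1 (hΓ.mem_of_mem_logic hL hD))
    exact ⟨Δ, hΔ, hsub, absurd h⟩
  · obtain ⟨Δ, hΔ, hsub, hψ⟩ := hΓ.exists_isMCS_of_box_not_mem hL h
    exact ⟨Δ, hΔ, hsub, fun _ => hψ⟩

end IsMCS

end NormalLogic

namespace TreeKind

/-- The lengths `m` such that `u` sees `u ++ z` whenever `z.length = m`, in the tree frame of
kind `k` (see `treeRel_iff`). -/
def Admits : TreeKind → ℕ → Prop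
  | .inn, m => m = 1
  | .rn, m => m ≤ 1
  | .itr, m => 1 ≤ m
  | .rt, _ => True

def IsRefl (k : TreeKind) : Prop := k.Admits 0

def IsTrans (k : TreeKind) : Prop := k.Admits 2

theorem admits_one (k : TreeKind) : k.Admits 1 := by
  cases k <;> simp [Admits]

theorem IsTrans.of_admits {k : TreeKind} {m : ℕ} (h : k.Admits m) (hm : 2 ≤ m) : k.IsTrans := by
  cases k <;> simp_all [Admits, IsTrans]
  omega

theorem IsTrans.admits_add {k : TreeKind} (hk : k.IsTrans) {a b : ℕ} (ha : k.Admits a)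
    (hb : k.Admits b) : k.Admits (a + b) := by
  cases k <;> simp_all [Admits, IsTrans]
  omega

end TreeKind

section TreeRel
variable {A : Type}

theorem transGen_sucRel_iff {u v : List A} :
    Relation.TransGen (sucRel A) u v ↔ ∃ z, z ≠ [] ∧ v = u ++ z := by
  constructor
  · intro h
    induction h with
    | single h => obtain ⟨x, rfl⟩ := h; exact ⟨[x], by simp⟩
    | tail _ h ih =>
      obtain ⟨x, rfl⟩ := h
      obtain ⟨z, -, rfl⟩ := ih
      exact ⟨z ++ [x], by simp⟩
  · rintro ⟨z, hz, rfl⟩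
    induction z using List.reverseRecOn with
    | nil => exact absurd rfl hz
    | append_singleton z x ih =>
      rcases eq_or_ne z [] with rfl | hne
      · exact .single ⟨x, by simp⟩
      · exact .tail (ih hne) ⟨x, by simp⟩

theorem reflTransGen_sucRel_iff {u v : List A} :
    Relation.ReflTransGen (sucRel A) u v ↔ ∃ z, v = u ++ z := by
  rw [Relation.reflTransGen_iff_eq_or_transGen, transGen_sucRel_iff]
  constructor
  · rintro (rfl | ⟨z, -, rfl⟩)
    exacts [⟨[], by simp⟩, ⟨z, rfl⟩]
  · rintro ⟨z, rfl⟩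
    rcases eq_or_ne z [] with rfl | hz
    exacts [.inl (by simp), .inr ⟨z, hz, rfl⟩]

theorem treeRel_iff (k : TreeKind) (u v : List A) :
    treeRel A k u v ↔ ∃ z, k.Admits z.length ∧ v = u ++ z := by
  have hsuc : sucRel A u v ↔ ∃ z : List A, z.length = 1 ∧ v = u ++ z := by
    simp only [sucRel, List.length_eq_one_iff]
    exact ⟨fun ⟨x, hx⟩ => ⟨[x], ⟨x, rfl⟩, hx⟩, fun ⟨_, ⟨x, hx⟩, h⟩ => ⟨x, hx ▸ h⟩⟩
  cases k with
  | inn => exact hsuc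
  | rn =>
    simp only [treeRel, hsuc, TreeKind.Admits, Nat.le_one_iff_eq_zero_or_eq_one, or_and_right,
      exists_or, List.length_eq_zero_iff, exists_eq_left, List.append_nil, eq_comm (a := u)]
  | itr =>
    simp only [treeRel, transGen_sucRel_iff, TreeKind.Admits, Nat.one_le_iff_ne_zero, ne_eq,
      List.length_eq_zero_iff]
  | rt => simp [treeRel, reflTransGen_sucRel_iff, TreeKind.Admits]

theorem treeRel_nil_iff (k : TreeKind) (z : List A) : treeRel A k [] z ↔ k.Admits z.length := by
  simp [treeRel_iff]

theorem treeRel_trans {k : TreeKind} (hk : k.IsTrans) {u v w : List A}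
    (h₁ : treeRel A k u v) (h₂ : treeRel A k v w) : treeRel A k u w := by
  obtain ⟨z₁, hz₁, rfl⟩ := (treeRel_iff k u v).1 h₁
  obtain ⟨z₂, hz₂, rfl⟩ := (treeRel_iff k _ w).1 h₂
  exact (treeRel_iff k _ _).2 ⟨z₁ ++ z₂, by simpa using hk.admits_add hz₁ hz₂, by simp⟩

end TreeRel

def treeAxioms {n : ℕ} (k : TreeKind) (i : Fin n) : Set (MFormula n) :=
  {φ | φ = dAxiom i ∨ (k.IsRefl ∧ φ = tAxiom i) ∨ (k.IsTrans ∧ φ = fourAxiom i)}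

theorem treeAxioms_subset_KLog {A : Type} [Nonempty A] (k : TreeKind) :
    treeAxioms k 0 ⊆ KLog (treeRel A k) := by
  rintro φ (rfl | ⟨hk, rfl⟩ | ⟨hk, rfl⟩) V w
  · intro h₁ h₂
    obtain ⟨a⟩ := ‹Nonempty A›
    have hR : treeRel A k w (w ++ [a]) := (treeRel_iff k w _).2 ⟨[a], k.admits_one, rfl⟩
    exact h₂ (w ++ [a]) hR (h₁ (w ++ [a]) hR)
  · exact fun h => h w ((treeRel_iff k w w).2 ⟨[], hk, by simp⟩)
  · exact fun h v hv u hu => h u (treeRel_trans hk hv hu)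

section CanonicalTree
variable {n : ℕ} {C : Type}

def labTreeRel (kinds : Fin n → TreeKind) (lab : C → Fin n) (i : Fin n) (x y : List C) : Prop :=
  ∃ z : List C, (∀ c ∈ z, lab c = i) ∧ (kinds i).Admits z.length ∧ y = x ++ z

/-- The letter `c` is the witness for `◇_{lab c} ¬(e c)`. -/
structure IsMCSTree (L : Set (MFormula n)) (lab : C → Fin n) (e : C → MFormula n)
    (g : List C → Set (MFormula n)) : Prop where
  isMCS : ∀ x, IsMCS L (g x)
  mem_of_box_mem : ∀ x c χ, box (lab c) χ ∈ g x → χ ∈ g (x ++ [c])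
  not_mem_of_box_not_mem : ∀ x c, box (lab c) (e c) ∉ g x → e c ∉ g (x ++ [c])

namespace IsMCSTree
variable {L : Set (MFormula n)} {kinds : Fin n → TreeKind} {lab : C → Fin n}
  {e : C → MFormula n} {g : List C → Set (MFormula n)}

theorem box_mem_append (hg : IsMCSTree L lab e g) (hL : IsNormalLogic L) {i : Fin n}
    (h4 : fourAxiom i ∈ L) {φ : MFormula n} {x : List C} (hφ : box i φ ∈ g x) :
    ∀ z : List C, (∀ c ∈ z, lab c = i) → box i φ ∈ g (x ++ z) := by
  intro z
  induction z using List.reverseRecOn with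
  | nil => simpa using hφ
  | append_singleton z c ih =>
    intro hz
    have hbox : box i φ ∈ g (x ++ z) := ih fun c' hc' => hz c' (by simp [hc'])
    have hboxbox : box i (box i φ) ∈ g (x ++ z) :=
      (hg.isMCS _).mem_of_derives hL (.mp_logic hL (hL.subst _ (fun _ => φ) h4) (.of_mem hL hbox))
    rw [← List.append_assoc]
    exact hg.mem_of_box_mem _ c _ (hz c (by simp) ▸ hboxbox)

theorem mem_of_box_mem_of_labTreeRel (hg : IsMCSTree L lab e g) (hL : IsNormalLogic L)
    (hax : ∀ i, treeAxioms (kinds i) i ⊆ L) {i : Fin n} {φ : MFormula n} {x y : List C}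
    (hφ : box i φ ∈ g x) (hxy : labTreeRel kinds lab i x y) : φ ∈ g y := by
  obtain ⟨z, hz, hadm, rfl⟩ := hxy
  rcases z.eq_nil_or_concat with rfl | ⟨z, c, rfl⟩
  · have hT : (box i φ).imp φ ∈ L := hL.subst _ (fun _ => φ) (hax i (.inr (.inl ⟨hadm, rfl⟩)))
    simpa using (hg.isMCS x).mem_of_derives hL (.mp_logic hL hT (.of_mem hL hφ))
  · have hc : lab c = i := hz c (by simp)
    rw [List.concat_eq_append, ← List.append_assoc]
    refine hg.mem_of_box_mem _ c φ (hc ▸ ?_)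
    rcases eq_or_ne z [] with rfl | hne
    · simpa using hφ
    have htrans : (kinds i).IsTrans :=
      .of_admits hadm (by simpa [Nat.one_le_iff_ne_zero] using hne)
    exact hg.box_mem_append hL (hax i (.inr (.inr ⟨htrans, rfl⟩))) hφ z
      fun c' hc' => hz c' (by simp [hc'])

theorem kSat_iff (hg : IsMCSTree L lab e g) (hL : IsNormalLogic L)
    (hax : ∀ i, treeAxioms (kinds i) i ⊆ L) (he : ∀ i ψ, ∃ c, lab c = i ∧ e c = ψ)
    (φ : MFormula n) (x : List C) :
    kSat (labTreeRel kinds lab) (fun p => {x | prop p ∈ g x}) x φ ↔ φ ∈ g x := by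
  induction φ generalizing x with
  | prop p => rfl
  | bot => exact iff_of_false id ((hg.isMCS x).bot_not_mem hL)
  | imp φ ψ ihφ ihψ =>
    rw [(hg.isMCS x).imp_mem_iff hL, ← ihφ, ← ihψ]
    rfl
  | box i φ ih =>
    refine ⟨fun h => by_contra fun hbox => ?_,
      fun h y hxy => (ih y).2 (hg.mem_of_box_mem_of_labTreeRel hL hax h hxy)⟩
    obtain ⟨c, rfl, rfl⟩ := he i φ
    have hxc : labTreeRel kinds lab (lab c) x (x ++ [c]) :=
      ⟨[c], by simp, (kinds _).admits_one, rfl⟩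
    exact hg.not_mem_of_box_not_mem x c hbox ((ih _).1 (h _ hxc))

end IsMCSTree

theorem exists_isMCSTree {L : Set (MFormula n)} (hL : IsNormalLogic L)
    (hD : ∀ i, (box i bot).neg ∈ L) (lab : C → Fin n) (e : C → MFormula n)
    {Γ₀ : Set (MFormula n)} (hΓ₀ : IsMCS L Γ₀) :
    ∃ g : List C → Set (MFormula n), g [] = Γ₀ ∧ IsMCSTree L lab e g := by
  choose succ hsucc using fun (c : C) (Γ : {Γ // IsMCS L Γ}) =>
    Γ.2.exists_succ hL (hD (lab c)) (e c)
  let g : List C → {Γ // IsMCS L Γ} := fun x =>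
    x.foldl (fun Γ c => ⟨succ c Γ, (hsucc c Γ).1⟩) ⟨Γ₀, hΓ₀⟩
  have hg : ∀ x c, (g (x ++ [c])).1 = succ c (g x) := by simp [g, List.foldl_append]
  exact ⟨fun x => (g x).1, rfl, fun x => (g x).2,
    fun x c χ hχ => hg x c ▸ (hsucc c (g x)).2.1 hχ,
    fun x c h => hg x c ▸ (hsucc c (g x)).2.2 h⟩

theorem exists_not_kSat_of_not_mem {L : Set (MFormula n)} (hL : IsNormalLogic L)
    {kinds : Fin n → TreeKind} (hax : ∀ i, treeAxioms (kinds i) i ⊆ L)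
    {lab : C → Fin n} (e : C → MFormula n) (he : ∀ i ψ, ∃ c, lab c = i ∧ e c = ψ)
    {φ : MFormula n} (hφ : φ ∉ L) :
    ∃ V, ¬ kSat (labTreeRel kinds lab) V [] φ := by
  have hcon : Consistent L (insert φ.neg ∅) := fun h => hφ <| by
    obtain ⟨l, hl, hL'⟩ := h.imp_of_insert hL
    obtain rfl : l = [] := List.eq_nil_iff_forall_not_mem.2 hl
    exact hL.mp _ _ (hL.taut _ fun v hb hv => by simp only [List.foldr_nil, neg, hv]; tauto) hL'
  obtain ⟨Γ₀, hsub, hΓ₀⟩ := exists_isMCS_superset hcon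
  obtain ⟨g, rfl, hg⟩ := exists_isMCSTree hL (fun i => hL.neg_box_bot_mem (hax i (.inl rfl)))
    lab e hΓ₀
  exact ⟨fun p => {x | prop p ∈ g x}, fun hsat =>
    (hΓ₀.neg_mem_iff hL).1 (hsub (Set.mem_insert _ _)) ((hg.kSat_iff hL hax he φ []).1 hsat)⟩

end CanonicalTree

theorem exists_surjective_of_infinite (A β : Type) [Countable A] [Infinite A] [Countable β]
    [Nonempty β] : ∃ f : A → β, Function.Surjective f := by
  obtain ⟨_⟩ := nonempty_denumerable A
  obtain ⟨f, hf⟩ := exists_surjective_nat β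
  exact ⟨f ∘ Denumerable.eqv A, hf.comp (Denumerable.eqv A).surjective⟩

namespace MFormula

def toNat {n : ℕ} : MFormula n → ℕ
  | prop p => Nat.pair 0 p
  | bot => Nat.pair 1 0
  | imp φ ψ => Nat.pair 2 (Nat.pair φ.toNat ψ.toNat)
  | box i φ => Nat.pair 3 (Nat.pair i φ.toNat)

theorem toNat_injective {n : ℕ} : Function.Injective (toNat (n := n)) := by
  intro φ ψ h
  induction φ generalizing ψ with
  | prop p => cases ψ <;> simp_all [toNat, Nat.pair_eq_pair]
  | bot => cases ψ <;> simp_all [toNat, Nat.pair_eq_pair]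
  | imp φ₁ φ₂ ih₁ ih₂ =>
    cases ψ <;> simp [toNat, Nat.pair_eq_pair] at h
    rw [ih₁ h.1, ih₂ h.2]
  | box i φ ih =>
    cases ψ <;> simp [toNat, Nat.pair_eq_pair, Fin.val_inj] at h
    rw [h.1, ih h.2]

instance {n : ℕ} : Countable (MFormula n) := toNat_injective.countable

instance {n : ℕ} : Nonempty (MFormula n) := ⟨bot⟩

end MFormula

section NeighborhoodSemantics
variable {n : ℕ} {X : Type}

theorem nSat_subst (τ : Fin n → X → Filter X) (V : ℕ → Set X) (s : ℕ → MFormula n)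
    (φ : MFormula n) (x : X) :
    nSat τ V x (φ.subst s) ↔ nSat τ (fun p => {y | nSat τ V y (s p)}) x φ := by
  induction φ generalizing x with
  | prop p => rfl
  | bot => rfl
  | imp φ ψ ihφ ihψ => exact imp_congr (ihφ x) (ihψ x)
  | box i φ ih =>
    change {y | nSat τ V y (φ.subst s)} ∈ τ i x ↔ _
    simp only [ih]
    rfl

theorem isNormalLogic_NLogn [Nonempty X] (τ : Fin n → X → Filter X) :
    IsNormalLogic (NLogn τ) where
  taut _ h V x := h (nSat τ V x) id fun _ _ => Iff.rfl
  kax _ _ _ _ _ h₁ h₂ := Filter.mp_mem h₂ h₁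
  mp _ _ h₁ h₂ V x := h₁ V x (h₂ V x)
  subst φ s h V x := (nSat_subst τ V s φ x).2 (h _ x)
  nec _ _ h V _ := Filter.univ_mem' fun y => h V y

theorem dAxiom_mem_NLogn [Nonempty X] (τ : Fin n → X → Filter X) (i : Fin n)
    (h : ∀ x, (τ i x).NeBot) : dAxiom i ∈ NLogn τ := fun _ x h₁ h₂ =>
  have := h x
  (Filter.nonempty_of_mem (Filter.inter_mem h₁ h₂)).elim fun _ hy => hy.2 hy.1

theorem tAxiom_mem_NLogn [Nonempty X] (τ : Fin n → X → Filter X) (i : Fin n)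
    (h : ∀ x, pure x ≤ τ i x) : tAxiom i ∈ NLogn τ :=
  fun _ x hx => h x hx

theorem fourAxiom_mem_NLogn [Nonempty X] (τ : Fin n → X → Filter X) (i : Fin n)
    (h : ∀ x, ∀ U ∈ τ i x, {y | U ∈ τ i y} ∈ τ i x) : fourAxiom i ∈ NLogn τ :=
  fun _ x hx => h x _ hx

theorem nSat_trTo_iff {Y : Type} (τ : Fin 2 → X → Filter X) (σ : Y → Filter Y) (e : Y → X)
    (i : Fin 2) (he : ∀ y, τ i (e y) = (σ y).map e) (V : ℕ → Set X) (φ : MFormula 1) (y : Y) :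
    nSat τ V (e y) (trTo i φ) ↔ nSat (fun _ => σ) (fun p => e ⁻¹' V p) y φ := by
  induction φ generalizing y with
  | prop p => rfl
  | bot => rfl
  | imp φ ψ ihφ ihψ => exact imp_congr (ihφ y) (ihψ y)
  | box j φ ih =>
    change {x | nSat τ V x (trTo i φ)} ∈ τ i (e y) ↔ _
    rw [he, Filter.mem_map]
    change {y' | nSat τ V (e y') (trTo i φ)} ∈ σ y ↔ _
    simp only [ih]
    rfl

theorem fusion_subset_NLog2 {X₁ X₂ : Type} [Nonempty X₁] [Nonempty X₂]
    {τ₁ : X₁ → Filter X₁} {τ₂ : X₂ → Filter X₂} {L₁ L₂ : Set (MFormula 1)}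
    (h₁ : L₁ ⊆ NLog τ₁) (h₂ : L₂ ⊆ NLog τ₂) :
    Fusion L₁ L₂ ⊆ NLog2 (prodTau1 τ₁) (prodTau2 τ₂) := by
  refine normalClosure_subset (isNormalLogic_NLogn _) (Set.union_subset ?_ ?_)
  · rintro _ ⟨φ, hφ, rfl⟩ V ⟨x, y⟩
    exact (nSat_trTo_iff _ τ₁ (·, y) 0 (fun _ => rfl) V φ x).2 (h₁ hφ _ x)
  · rintro _ ⟨φ, hφ, rfl⟩ V ⟨x, y⟩
    exact (nSat_trTo_iff _ τ₂ (x, ·) 1 (fun _ => rfl) V φ y).2 (h₂ hφ _ y)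

end NeighborhoodSemantics

namespace List

theorem flatMap_range_two_mul {C : Type} (f : ℕ → List C) (N : ℕ) :
    (range (2 * N)).flatMap f = (range N).flatMap fun j => f (2 * j) ++ f (2 * j + 1) := by
  induction N with
  | zero => rfl
  | succ N ih => simp [Nat.mul_succ, List.range_succ, ih]

theorem flatMap_range_getElem?_toList {C : Type} (z : List C) :
    (range z.length).flatMap (fun j => z[j]?.toList) = z := by
  induction z with
  | nil => rfl
  | cons a z ih => simpa [range_succ_eq_map, flatMap_map] using ih

theorem exists_eq_map_inl {A B : Type} {z : List (A ⊕ B)} (h : ∀ c ∈ z, c.isLeft) :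
    ∃ w : List A, z = w.map Sum.inl := by
  induction z with
  | nil => exact ⟨[], rfl⟩
  | cons c z ih =>
    obtain ⟨w, rfl⟩ := ih fun c' hc' => h c' (.tail _ hc')
    cases c with
    | inl a => exact ⟨a :: w, rfl⟩
    | inr b => simpa using h (.inr b) (.head _)

theorem exists_eq_map_inr {A B : Type} {z : List (A ⊕ B)} (h : ∀ c ∈ z, c.isRight) :
    ∃ w : List B, z = w.map Sum.inr := by
  induction z with
  | nil => exact ⟨[], rfl⟩
  | cons c z ih =>
    obtain ⟨w, rfl⟩ := ih fun c' hc' => h c' (.tail _ hc')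
    cases c with
    | inl a => simpa using h (.inl a) (.head _)
    | inr b => exact ⟨b :: w, rfl⟩

end List

namespace PSeq
variable {A B : Type}

theorem eq_none_of_st_le (γ : PSeq A) {k : ℕ} (hk : γ.st ≤ k) : γ.1 k = none :=
  Nat.sInf_mem γ.2 k hk

theorem st_le_of_forall {γ : PSeq A} {N : ℕ} (h : ∀ k ≥ N, γ.1 k = none) : γ.st ≤ N :=
  Nat.sInf_le h

theorem st_le_st_of_agree {γ γ' : PSeq A} (h : ∀ j < γ.st, γ'.1 j = γ.1 j) : γ.st ≤ γ'.st := by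
  refine st_le_of_forall fun k hk => ?_
  rcases lt_or_ge k γ.st with hlt | hge
  · rw [← h k hlt]
    exact γ'.eq_none_of_st_le hk
  · exact γ.eq_none_of_st_le hge

theorem forget_eq_flatMap (γ : PSeq A) {N : ℕ} (hN : γ.st ≤ N) :
    γ.forget = (List.range N).flatMap fun j => (γ.1 j).toList := by
  induction N, hN using Nat.le_induction with
  | base => simp [forget, List.reduceOption, List.filterMap_eq_flatMap_toList, List.flatMap_map]
  | succ N hN ih => simp [List.range_succ, ih, γ.eq_none_of_st_le hN]

theorem forget_eq_append_of_agree {γ γ' : PSeq A} {m t : ℕ} (hag : ∀ j < m, γ'.1 j = γ.1 j)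
    (hγ : γ.st ≤ m) (hγ' : γ'.st ≤ m + t) :
    γ'.forget = γ.forget ++ (List.range t).flatMap fun j => (γ'.1 (m + j)).toList := by
  rw [γ'.forget_eq_flatMap hγ', γ.forget_eq_flatMap hγ, List.range_add, List.flatMap_append,
    List.flatMap_map]
  congr 1
  exact List.flatMap_congr fun j hj => by rw [hag j (List.mem_range.1 hj)]

theorem exists_agree_forget_eq_append (γ : PSeq A) {m : ℕ} (hm : γ.st ≤ m) (z : List A) :
    ∃ γ' : PSeq A, (∀ j < m, γ'.1 j = γ.1 j) ∧ γ'.forget = γ.forget ++ z := by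
  have hnone : ∀ k ≥ m + z.length, (if k < m then γ.1 k else z[k - m]?) = none := fun k hk => by
    simp [show ¬ k < m by omega]
    omega
  let γ' : PSeq A := ⟨_, _, hnone⟩
  refine ⟨γ', fun j hj => if_pos hj, ?_⟩
  rw [forget_eq_append_of_agree (fun j hj => if_pos hj) hm (st_le_of_forall (γ := γ') hnone)]
  simpa [γ'] using List.flatMap_range_getElem?_toList z

theorem interleave_two_mul (α : PSeq A) (β : PSeq B) (j : ℕ) :
    (interleave α β).1 (2 * j) = (α.1 j).map Sum.inl := by
  simp [interleave]

theorem interleave_two_mul_add_one (α : PSeq A) (β : PSeq B) (j : ℕ) :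
    (interleave α β).1 (2 * j + 1) = (β.1 j).map Sum.inr := by
  simp [interleave, Nat.add_mod, Nat.add_div]

theorem st_interleave_le {α : PSeq A} {β : PSeq B} {N : ℕ} (hα : α.st ≤ N) (hβ : β.st ≤ N) :
    (interleave α β).st ≤ 2 * N := by
  refine st_le_of_forall fun k hk => ?_
  rcases Nat.even_or_odd' k with ⟨j, rfl | rfl⟩
  · rw [interleave_two_mul, α.eq_none_of_st_le (by omega), Option.map_none]
  · rw [interleave_two_mul_add_one, β.eq_none_of_st_le (by omega), Option.map_none]

theorem gMap_eq_flatMap {α : PSeq A} {β : PSeq B} {N : ℕ} (hα : α.st ≤ N) (hβ : β.st ≤ N) :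
    gMap (α, β) = (List.range N).flatMap fun j =>
      (α.1 j).toList.map Sum.inl ++ (β.1 j).toList.map Sum.inr := by
  simp [gMap, forget_eq_flatMap _ (st_interleave_le hα hβ), List.flatMap_range_two_mul,
    interleave_two_mul, interleave_two_mul_add_one, Option.toList_map]

def zero : PSeq A := ⟨fun _ => none, 0, fun _ _ => rfl⟩

theorem gMap_zero : gMap ((zero : PSeq A), (zero : PSeq B)) = [] :=
  gMap_eq_flatMap (N := 0) (st_le_of_forall fun _ _ => rfl) (st_le_of_forall fun _ _ => rfl)

theorem gMap_eq_append_inl {α α' : PSeq A} {β : PSeq B} {m : ℕ} {z : List A}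
    (hag : ∀ j < m, α'.1 j = α.1 j) (hα : α.st ≤ m) (hβ : β.st ≤ m)
    (hz : α'.forget = α.forget ++ z) : gMap (α', β) = gMap (α, β) ++ z.map Sum.inl := by
  have ht : α'.st ≤ m + α'.st := Nat.le_add_left _ _
  rw [forget_eq_append_of_agree hag hα ht] at hz
  rw [← List.append_cancel_left hz, gMap_eq_flatMap ht (by omega), gMap_eq_flatMap hα hβ,
    List.range_add, List.flatMap_append, List.flatMap_map, List.map_flatMap]
  congr 1
  · exact List.flatMap_congr fun j hj => by rw [hag j (List.mem_range.1 hj)]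
  · exact List.flatMap_congr fun j _ => by simp [β.eq_none_of_st_le (by omega : β.st ≤ m + j)]

theorem gMap_eq_append_inr {α : PSeq A} {β β' : PSeq B} {m : ℕ} {z : List B}
    (hag : ∀ j < m, β'.1 j = β.1 j) (hα : α.st ≤ m) (hβ : β.st ≤ m)
    (hz : β'.forget = β.forget ++ z) : gMap (α, β') = gMap (α, β) ++ z.map Sum.inr := by
  have ht : β'.st ≤ m + β'.st := Nat.le_add_left _ _
  rw [forget_eq_append_of_agree hag hβ ht] at hz
  rw [← List.append_cancel_left hz, gMap_eq_flatMap (by omega) ht, gMap_eq_flatMap hα hβ,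
    List.range_add, List.flatMap_append, List.flatMap_map, List.map_flatMap]
  congr 1
  · exact List.flatMap_congr fun j hj => by rw [hag j (List.mem_range.1 hj)]
  · exact List.flatMap_congr fun j _ => by simp [α.eq_none_of_st_le (by omega : α.st ≤ m + j)]

end PSeq

section NOmega
variable {A : Type}

theorem Unbhd_antitone (R : List A → List A → Prop) (α : PSeq A) :
    Antitone fun k => Unbhd R k α :=
  fun _ _ hkj _ hβ => ⟨fun i hi => hβ.1 i (lt_of_lt_of_le hi (max_le_max_right _ hkj)), hβ.2⟩

theorem nOmega_hasBasis (R : List A → List A → Prop) (α : PSeq A) :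
    (nOmega R α).HasBasis (fun _ => True) fun k => Unbhd R k α :=
  Filter.hasBasis_iInf_principal (Unbhd_antitone R α).directed_ge

theorem mem_nOmega_iff {R : List A → List A → Prop} {α : PSeq A} {S : Set (PSeq A)} :
    S ∈ nOmega R α ↔ ∃ k, Unbhd R k α ⊆ S := by
  simp [(nOmega_hasBasis R α).mem_iff]

theorem preimage_mem_nOmega_iff {W : Type} {R : List A → List A → Prop} {α : PSeq A}
    {f : PSeq A → W} {T : Set W} {k₀ : ℕ} (h : ∀ k ≥ k₀, f '' Unbhd R k α = T) (P : Set W) :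
    f ⁻¹' P ∈ nOmega R α ↔ T ⊆ P := by
  rw [mem_nOmega_iff]
  refine ⟨fun ⟨k, hk⟩ => ?_, fun hT => ⟨k₀, ?_⟩⟩
  · rw [← h (max k k₀) (le_max_right _ _), Set.image_subset_iff]
    exact (Unbhd_antitone R α (le_max_left _ _)).trans hk
  · rw [← Set.image_subset_iff, h k₀ le_rfl]
    exact hT

theorem mem_Unbhd_treeRel {kd : TreeKind} {k : ℕ} {α β : PSeq A} {z : List A}
    (hag : ∀ j < max k α.st, β.1 j = α.1 j) (hβ : β.forget = α.forget ++ z)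
    (hz : kd.Admits z.length) : β ∈ Unbhd (treeRel A kd) k α :=
  ⟨fun j hj => (hag j hj).symm, (treeRel_iff kd _ _).2 ⟨z, hz, hβ⟩⟩

theorem Unbhd_subset_Unbhd_of_mem {kd : TreeKind} (hk : kd.IsTrans) {k : ℕ} {α β : PSeq A}
    (hβ : β ∈ Unbhd (treeRel A kd) k α) :
    Unbhd (treeRel A kd) k β ⊆ Unbhd (treeRel A kd) k α := by
  obtain ⟨hαβ, hRαβ⟩ := hβ
  have hst : α.st ≤ β.st :=
    PSeq.st_le_st_of_agree fun j hj => (hαβ j (lt_of_lt_of_le hj (le_max_right _ _))).symm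
  rintro γ ⟨hβγ, hRβγ⟩
  refine ⟨fun j hj => (hαβ j hj).trans (hβγ j (lt_of_lt_of_le hj (max_le_max_left _ hst))),
    treeRel_trans hk hRαβ hRβγ⟩

theorem treeAxioms_subset_NLog_nOmega [Nonempty A] (kd : TreeKind) :
    treeAxioms kd 0 ⊆ NLog (nOmega (treeRel A kd)) := by
  obtain ⟨a⟩ := ‹Nonempty A›
  rintro φ (rfl | ⟨hk, rfl⟩ | ⟨hk, rfl⟩)
  · refine dAxiom_mem_NLogn _ 0 fun α => (nOmega_hasBasis _ α).neBot_iff.2 fun {k} _ => ?_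
    obtain ⟨β, hag, hβ⟩ := α.exists_agree_forget_eq_append (le_max_right k α.st) [a]
    exact ⟨β, mem_Unbhd_treeRel hag hβ kd.admits_one⟩
  · refine tAxiom_mem_NLogn _ 0 fun α => (nOmega_hasBasis _ α).ge_iff.2 fun k _ => ?_
    exact ⟨fun _ _ => rfl, (treeRel_iff kd _ _).2 ⟨[], hk, by simp⟩⟩
  · refine fourAxiom_mem_NLogn _ 0 fun α U hU => ?_
    obtain ⟨k, hkU⟩ := mem_nOmega_iff.1 hU
    exact mem_nOmega_iff.2 ⟨k, fun β hβ =>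
      mem_nOmega_iff.2 ⟨k, (Unbhd_subset_Unbhd_of_mem hk hβ).trans hkU⟩⟩

theorem KLog_subset_normalClosure_treeAxioms [Countable A] [Infinite A] (kd : TreeKind) :
    KLog (treeRel A kd) ⊆ NormalClosure (treeAxioms kd 0) := by
  intro φ hφ
  by_contra hn
  obtain ⟨e, he⟩ := exists_surjective_of_infinite A (MFormula 1)
  have hrel : labTreeRel (fun _ => kd) (fun _ : A => (0 : Fin 1)) = fun _ => treeRel A kd := by
    ext i x y
    simp [labTreeRel, treeRel_iff, Fin.fin_one_eq_zero i]
  obtain ⟨V, hV⟩ := exists_not_kSat_of_not_mem (isNormalLogic_normalClosure _)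
    (kinds := fun _ => kd) (fun i => Fin.fin_one_eq_zero i ▸ subset_normalClosure _) e
    (fun i ψ => (he ψ).imp fun _ hc => ⟨(Fin.fin_one_eq_zero i).symm, hc⟩) hn
  exact hV (hrel ▸ hφ V [])

theorem KLog_subset_NLog_nOmega [Countable A] [Infinite A] (kd : TreeKind) :
    KLog (treeRel A kd) ⊆ NLog (nOmega (treeRel A kd)) :=
  (KLog_subset_normalClosure_treeAxioms kd).trans
    (normalClosure_subset (isNormalLogic_NLogn _) (treeAxioms_subset_NLog_nOmega kd))

end NOmega

section Product
variable {A B : Type}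

theorem image_gMap_Unbhd_left (k₁ : TreeKind) (α : PSeq A) {β : PSeq B} {k : ℕ}
    (hk : β.st ≤ k) : (fun α' => gMap (α', β)) '' Unbhd (treeRel A k₁) k α =
      {y | prodRel1 A B k₁ (gMap (α, β)) y} := by
  have hβ : β.st ≤ max k α.st := hk.trans (le_max_left _ _)
  ext y
  constructor
  · rintro ⟨α', ⟨hag, hR⟩, rfl⟩
    obtain ⟨z, hz, hα'⟩ := (treeRel_iff k₁ _ _).1 hR
    exact ⟨z, (treeRel_nil_iff k₁ z).2 hz,
      PSeq.gMap_eq_append_inl (fun j hj => (hag j hj).symm) (le_max_right _ _) hβ hα'⟩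
  · rintro ⟨z, hz, rfl⟩
    obtain ⟨α', hag, hα'⟩ := α.exists_agree_forget_eq_append (le_max_right k α.st) z
    exact ⟨α', mem_Unbhd_treeRel hag hα' ((treeRel_nil_iff k₁ z).1 hz),
      PSeq.gMap_eq_append_inl hag (le_max_right _ _) hβ hα'⟩

theorem image_gMap_Unbhd_right (k₂ : TreeKind) {α : PSeq A} (β : PSeq B) {k : ℕ}
    (hk : α.st ≤ k) : (fun β' => gMap (α, β')) '' Unbhd (treeRel B k₂) k β =
      {y | prodRel2 A B k₂ (gMap (α, β)) y} := by
  have hα : α.st ≤ max k β.st := hk.trans (le_max_left _ _)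
  ext y
  constructor
  · rintro ⟨β', ⟨hag, hR⟩, rfl⟩
    obtain ⟨z, hz, hβ'⟩ := (treeRel_iff k₂ _ _).1 hR
    exact ⟨z, (treeRel_nil_iff k₂ z).2 hz,
      PSeq.gMap_eq_append_inr (fun j hj => (hag j hj).symm) hα (le_max_right _ _) hβ'⟩
  · rintro ⟨z, hz, rfl⟩
    obtain ⟨β', hag, hβ'⟩ := β.exists_agree_forget_eq_append (le_max_right k β.st) z
    exact ⟨β', mem_Unbhd_treeRel hag hβ' ((treeRel_nil_iff k₂ z).1 hz),
      PSeq.gMap_eq_append_inr hag hα (le_max_right _ _) hβ'⟩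

theorem nSat_prod_iff_kSat_gMap (k₁ k₂ : TreeKind) (V : ℕ → Set (List (A ⊕ B)))
    (φ : MFormula 2) (α : PSeq A) (β : PSeq B) :
    nSat ![prodTau1 (nOmega (treeRel A k₁)), prodTau2 (nOmega (treeRel B k₂))]
        (fun p => gMap ⁻¹' V p) (α, β) φ ↔
      kSat ![prodRel1 A B k₁, prodRel2 A B k₂] V (gMap (α, β)) φ := by
  induction φ generalizing α β with
  | prop p => rfl
  | bot => rfl
  | imp φ ψ ihφ ihψ => exact imp_congr (ihφ α β) (ihψ α β)
  | box i φ ih =>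
    fin_cases i
    · change {α' | nSat _ _ (α', β) φ} ∈ nOmega (treeRel A k₁) α ↔ _
      simp only [ih]
      exact preimage_mem_nOmega_iff (fun k hk => image_gMap_Unbhd_left k₁ α hk) {y | kSat _ V y φ}
    · change {β' | nSat _ _ (α, β') φ} ∈ nOmega (treeRel B k₂) β ↔ _
      simp only [ih]
      exact preimage_mem_nOmega_iff (fun k hk => image_gMap_Unbhd_right k₂ β hk) {y | kSat _ V y φ}

theorem labTreeRel_sumElim (k₁ k₂ : TreeKind) :
    labTreeRel ![k₁, k₂] (Sum.elim (fun _ : A => (0 : Fin 2)) fun _ : B => 1) =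
      ![prodRel1 A B k₁, prodRel2 A B k₂] := by
  ext i x y
  fin_cases i
  · constructor
    · rintro ⟨z, hz, hadm, rfl⟩
      obtain ⟨w, rfl⟩ := List.exists_eq_map_inl (z := z) fun c hc => by cases c <;> simp_all
      exact ⟨w, (treeRel_nil_iff k₁ w).2 (by simpa using hadm), rfl⟩
    · rintro ⟨w, hw, rfl⟩
      exact ⟨w.map Sum.inl, by simp, by simpa [treeRel_nil_iff] using hw, rfl⟩
  · constructor
    · rintro ⟨z, hz, hadm, rfl⟩
      obtain ⟨w, rfl⟩ := List.exists_eq_map_inr (z := z) fun c hc => by cases c <;> simp_all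
      exact ⟨w, (treeRel_nil_iff k₂ w).2 (by simpa using hadm), rfl⟩
    · rintro ⟨w, hw, rfl⟩
      exact ⟨w.map Sum.inr, by simp, by simpa [treeRel_nil_iff] using hw, rfl⟩

theorem treeAxioms_subset_image_trTo (k : TreeKind) (i : Fin 2) :
    treeAxioms k i ⊆ trTo i '' treeAxioms k 0 := by
  rintro φ (rfl | ⟨hk, rfl⟩ | ⟨hk, rfl⟩)
  exacts [⟨_, .inl rfl, rfl⟩, ⟨_, .inr (.inl ⟨hk, rfl⟩), rfl⟩, ⟨_, .inr (.inr ⟨hk, rfl⟩), rfl⟩]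

theorem treeAxioms_subset_fusion [Nonempty A] [Nonempty B] (k₁ k₂ : TreeKind) (i : Fin 2) :
    treeAxioms (![k₁, k₂] i) i ⊆ Fusion (KLog (treeRel A k₁)) (KLog (treeRel B k₂)) := by
  refine (treeAxioms_subset_image_trTo _ i).trans (Set.Subset.trans ?_ (subset_normalClosure _))
  fin_cases i
  · exact (Set.image_mono (treeAxioms_subset_KLog k₁)).trans Set.subset_union_left
  · exact (Set.image_mono (treeAxioms_subset_KLog k₂)).trans Set.subset_union_right

end Product

/-- For tree frames over disjoint countably infinite alphabets:
`Log(N_ω(F₁) × N_ω(F₂)) = Log(F₁) ⊗ Log(F₂)`. -/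
theorem log_nOmega_prod_eq (A B : Type) [Countable A] [Infinite A]
    [Countable B] [Infinite B] (k₁ k₂ : TreeKind) :
    NLog2 (prodTau1 (nOmega (treeRel A k₁))) (prodTau2 (nOmega (treeRel B k₂)))
      = Fusion (KLog (treeRel A k₁)) (KLog (treeRel B k₂)) := by
  refine Set.Subset.antisymm (fun φ hφ => by_contra fun hn => ?_)
    (fusion_subset_NLog2 (KLog_subset_NLog_nOmega k₁) (KLog_subset_NLog_nOmega k₂))
  obtain ⟨eA, heA⟩ := exists_surjective_of_infinite A (MFormula 2)
  obtain ⟨eB, heB⟩ := exists_surjective_of_infinite B (MFormula 2)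
  have he : ∀ i ψ, ∃ c, Sum.elim (fun _ : A => (0 : Fin 2)) (fun _ : B => 1) c = i ∧
      Sum.elim eA eB c = ψ := by
    intro i ψ
    fin_cases i
    · obtain ⟨a, rfl⟩ := heA ψ
      exact ⟨.inl a, rfl, rfl⟩
    · obtain ⟨b, rfl⟩ := heB ψ
      exact ⟨.inr b, rfl, rfl⟩
  obtain ⟨V, hV⟩ := exists_not_kSat_of_not_mem (isNormalLogic_normalClosure _)
    (treeAxioms_subset_fusion k₁ k₂) (Sum.elim eA eB) he hn
  rw [labTreeRel_sumElim] at hV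
  exact hV (PSeq.gMap_zero ▸ (nSat_prod_iff_kSat_gMap k₁ k₂ V φ _ _).1 (hφ _ _))
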